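/- Let P be the uplink transmit power of a user with truncated channel-inversion power control: P = ρ R^η if R ≤ (P_u/ρ)^{1/η} and P = P_u otherwise, where R has PDF 2π λ̄ r exp(-π λ̄ r²). Then for ζ > 0, E[P^ζ] = ρ^ζ γ(ζη/2 + 1, π λ̄ (P_u/ρ)^{2/η}) / (π λ̄)^{ζη/2} + P_u^ζ exp(-π λ̄ (P_u/ρ)^{2/η}), where γ(·,·) is the lower incomplete gamma function. -/

import Mathlib

open MeasureTheory Real

/-- The lower incomplete gamma function `γ(s, x) = ∫₀ˣ t^(s-1) e^(-t) dt`. -/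
noncomputable def lowerIncGamma (s x : ℝ) : ℝ :=
  ∫ t in Set.Ioc (0 : ℝ) x, t ^ (s - 1) * Real.exp (-t)

/-!
Write `a = π λ̄` and split the integral at the truncation radius `c = (P_u/ρ)^(1/η)`.
Beyond `c` the power is the constant `P_u`, and `∫_c^∞ 2a r e^{-a r²} dr = e^{-a c²}` since `-e^{-a r²}` is an antiderivative.
Below `c` the integrand is `ρ^ζ r^{ηζ} · 2a r e^{-a r²}`, and the substitution `t = a r²` turns it
into `ρ^ζ a^{-ηζ/2} ∫_0^{a c²} t^{ηζ/2} e^{-t} dt`, a lower incomplete gamma function.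
-/

/-- `rayleighPDF (π * λ̄)` is the density of `R`, the distance to the nearest point of a planar
Poisson process of intensity `λ̄`. -/
noncomputable def rayleighPDF (a r : ℝ) : ℝ :=
  2 * a * r * exp (-(a * r ^ 2))

lemma lowerIncGamma_add_one_eq_intervalIntegral {s x : ℝ} (hx : 0 ≤ x) :
    lowerIncGamma (s + 1) x = ∫ t in (0 : ℝ)..x, t ^ s * exp (-t) := by
  rw [lowerIncGamma, intervalIntegral.integral_of_le hx, add_sub_cancel_right]

lemma continuous_rayleighPDF (a : ℝ) : Continuous (rayleighPDF a) := by
  unfold rayleighPDF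
  fun_prop

lemma hasDerivAt_neg_exp_neg_mul_sq (a r : ℝ) :
    HasDerivAt (fun x => -exp (-(a * x ^ 2))) (rayleighPDF a r) r := by
  have h := (((hasDerivAt_pow 2 r).const_mul a).neg.exp).neg
  refine h.congr_deriv ?_
  simp only [rayleighPDF, Pi.neg_apply]
  ring

lemma rayleighPDF_nonneg {a r : ℝ} (ha : 0 ≤ a) (hr : 0 ≤ r) : 0 ≤ rayleighPDF a r := by
  unfold rayleighPDF
  positivity

lemma tendsto_neg_exp_neg_mul_sq_atTop {a : ℝ} (ha : 0 < a) :
    Filter.Tendsto (fun x => -exp (-(a * x ^ 2))) Filter.atTop (nhds 0) := by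
  have h : Filter.Tendsto (fun x : ℝ => -(a * x ^ 2)) Filter.atTop Filter.atBot :=
    Filter.tendsto_neg_atTop_atBot.comp
      ((Filter.tendsto_pow_atTop two_ne_zero).const_mul_atTop ha)
  simpa using (tendsto_exp_atBot.comp h).neg

lemma integrableOn_Ioi_rayleighPDF {a c : ℝ} (ha : 0 < a) (hc : 0 ≤ c) :
    IntegrableOn (rayleighPDF a) (Set.Ioi c) :=
  integrableOn_Ioi_deriv_of_nonneg
    (hasDerivAt_neg_exp_neg_mul_sq a c).continuousAt.continuousWithinAt
    (fun r _ => hasDerivAt_neg_exp_neg_mul_sq a r)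
    (fun _ hr => rayleighPDF_nonneg ha.le (hc.trans (le_of_lt hr)))
    (tendsto_neg_exp_neg_mul_sq_atTop ha)

lemma integral_Ioi_rayleighPDF {a c : ℝ} (ha : 0 < a) (hc : 0 ≤ c) :
    ∫ r in Set.Ioi c, rayleighPDF a r = exp (-(a * c ^ 2)) := by
  rw [integral_Ioi_of_hasDerivAt_of_nonneg
    (hasDerivAt_neg_exp_neg_mul_sq a c).continuousAt.continuousWithinAt
    (fun r _ => hasDerivAt_neg_exp_neg_mul_sq a r)
    (fun _ hr => rayleighPDF_nonneg ha.le (hc.trans (le_of_lt hr)))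
    (tendsto_neg_exp_neg_mul_sq_atTop ha)]
  ring

lemma integrableOn_Ioc_rpow_mul_rayleighPDF {p : ℝ} (hp : 0 ≤ p) (a c : ℝ) :
    IntegrableOn (fun r => r ^ p * rayleighPDF a r) (Set.Ioc 0 c) :=
  (((continuous_rpow_const hp).mul (continuous_rayleighPDF a)).integrableOn_Icc).mono_set
    Set.Ioc_subset_Icc_self

lemma integral_Ioc_rpow_mul_rayleighPDF {a c p : ℝ} (ha : 0 < a) (hc : 0 ≤ c) (hp : 0 ≤ p) :
    ∫ r in Set.Ioc 0 c, r ^ p * rayleighPDF a r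
      = lowerIncGamma (p / 2 + 1) (a * c ^ 2) / a ^ (p / 2) := by
  have hsubst := intervalIntegral.integral_deriv_smul_comp (a := 0) (b := c)
    (f := fun r => a * r ^ 2) (f' := fun r => 2 * a * r) (g := fun t => t ^ (p / 2) * exp (-t))
    (fun r _ => ((hasDerivAt_pow 2 r).const_mul a).congr_deriv (by norm_num; ring))
    (by fun_prop) (by fun_prop (disch := positivity))
  have hpointwise : Set.EqOn (fun r => r ^ p * rayleighPDF a r)
      (fun r => a ^ (-(p / 2)) * ((2 * a * r) • ((fun t => t ^ (p / 2) * exp (-t)) ∘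
        fun r => a * r ^ 2) r)) (Set.uIcc 0 c) := by
    intro r hr
    rw [Set.uIcc_of_le hc] at hr
    have hr0 : 0 ≤ r := hr.1
    have hpow : (a * r ^ 2) ^ (p / 2) = a ^ (p / 2) * r ^ p := by
      rw [mul_rpow ha.le (by positivity), ← rpow_natCast r 2, ← rpow_mul hr0]
      norm_num [mul_div_cancel₀]
    simp only [Function.comp, smul_eq_mul, hpow, rayleighPDF, rpow_neg ha.le]
    field_simp
  rw [← intervalIntegral.integral_of_le hc, intervalIntegral.integral_congr hpointwise,
    intervalIntegral.integral_const_mul, hsubst,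
    lowerIncGamma_add_one_eq_intervalIntegral (by positivity), rpow_neg ha.le]
  rw [zero_pow two_ne_zero, mul_zero]
  ring

lemma integral_Ioi_ite_mul {f g : ℝ → ℝ} {c K : ℝ} (hc : 0 ≤ c)
    (hg : IntegrableOn (fun r => g r * f r) (Set.Ioc 0 c)) (hf : IntegrableOn f (Set.Ioi c)) :
    ∫ r in Set.Ioi 0, (if r ≤ c then g r else K) * f r
      = (∫ r in Set.Ioc 0 c, g r * f r) + K * ∫ r in Set.Ioi c, f r := by
  have hhead : Set.EqOn (fun r => (if r ≤ c then g r else K) * f r) (fun r => g r * f r)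
      (Set.Ioc 0 c) := fun r hr => by simp only [if_pos hr.2]
  have htail : Set.EqOn (fun r => (if r ≤ c then g r else K) * f r) (fun r => K * f r)
      (Set.Ioi c) := fun r hr => by simp only [if_neg (not_le.mpr (Set.mem_Ioi.mp hr))]
  rw [← Set.Ioc_union_Ioi_eq_Ioi hc, setIntegral_union (Set.Ioc_disjoint_Ioi le_rfl)
      measurableSet_Ioi (hg.congr_fun hhead.symm measurableSet_Ioc)
      (IntegrableOn.congr_fun (hf.const_mul K) htail.symm measurableSet_Ioi),
    setIntegral_congr_fun measurableSet_Ioc hhead, setIntegral_congr_fun measurableSet_Ioi htail,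
    integral_const_mul]

/-- For truncated channel-inversion power control
`P = ρ Rᵉᵗᵃ` if `R ≤ (P_u/ρ)^(1/η)` and `P = P_u` otherwise, where `R` has the
Rayleigh PDF `2π λ̄ r exp(-π λ̄ r²)`, the `ζ`-th moment of the transmit power is
`E[P^ζ] = ρ^ζ γ(ζη/2 + 1, π λ̄ (P_u/ρ)^(2/η)) / (π λ̄)^(ζη/2)
          + P_u^ζ exp(-π λ̄ (P_u/ρ)^(2/η))` for `ζ > 0`. -/
theorem stmt11
    (lamBar Pu ρ η ζ : ℝ) (hlam : 0 < lamBar) (hPu : 0 < Pu) (hρ : 0 < ρ)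
    (hη : 2 < η) (hζ : 0 < ζ) :
    ∫ r in Set.Ioi (0 : ℝ),
        (if r ≤ (Pu / ρ) ^ (1 / η) then ρ * r ^ η else Pu) ^ ζ
          * (2 * π * lamBar * r * Real.exp (-(π * lamBar * r ^ 2)))
      = ρ ^ ζ * lowerIncGamma (ζ * η / 2 + 1) (π * lamBar * (Pu / ρ) ^ (2 / η))
          / (π * lamBar) ^ (ζ * η / 2)
        + Pu ^ ζ * Real.exp (-(π * lamBar * (Pu / ρ) ^ (2 / η))) := by
  set a := π * lamBar
  set c := (Pu / ρ) ^ (1 / η)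
  have ha : 0 < a := mul_pos pi_pos hlam
  have hc : 0 ≤ c := by positivity
  have hp : 0 ≤ ζ * η := by nlinarith
  have hc2 : (Pu / ρ) ^ (2 / η) = c ^ 2 := by
    rw [← rpow_natCast, ← rpow_mul (by positivity)]
    congr 1
    push_cast
    ring
  have hintegrand : Set.EqOn
      (fun r => (if r ≤ c then ρ * r ^ η else Pu) ^ ζ * (2 * π * lamBar * r * exp (-(a * r ^ 2))))
      (fun r => (if r ≤ c then ρ ^ ζ * r ^ (ζ * η) else Pu ^ ζ) * rayleighPDF a r)
      (Set.Ioi 0) := by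
    intro r (hr : 0 < r)
    dsimp only
    rw [apply_ite (· ^ ζ), mul_rpow hρ.le (by positivity), ← rpow_mul hr.le, mul_comm η ζ,
      rayleighPDF, mul_assoc 2 π lamBar]
  have hhead := (integrableOn_Ioc_rpow_mul_rayleighPDF hp a c).const_mul (ρ ^ ζ)
  simp only [← mul_assoc] at hhead
  rw [setIntegral_congr_fun measurableSet_Ioi hintegrand,
    integral_Ioi_ite_mul hc hhead (integrableOn_Ioi_rayleighPDF ha hc)]
  simp only [mul_assoc, integral_const_mul]
  rw [integral_Ioc_rpow_mul_rayleighPDF ha hc hp, integral_Ioi_rayleighPDF ha hc, hc2]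
  ring
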